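/- arXiv:2110.02162 — 6 statements merged into one kernel-verified Lean document; each statement's English description precedes it below -/
import Mathlib

section
/- Let B_3 be the braid group on 3 strands. If G is a finite group and f : B_3 → G is a surjective group homomorphism with G not cyclic, then 6 ≤ Nat.card G, and if Nat.card G = 6 then G is isomorphic to the symmetric group S_3 = Equiv.Perm (Fin 3). -/
/-- The braid relations on `n` strands, as elements of the free group on
`n - 1` generators (generator `i` corresponds to the half twist `σ_{i+1}`
in the usual 1-indexed notation). -/
def braidRels (n : ℕ) : Set (FreeGroup (Fin (n - 1))) :=
  { r | (∃ i j : Fin (n - 1), (j : ℕ) = (i : ℕ) + 1 ∧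
          r = FreeGroup.of i * FreeGroup.of j * FreeGroup.of i *
              (FreeGroup.of j * FreeGroup.of i * FreeGroup.of j)⁻¹) ∨
        (∃ i j : Fin (n - 1), (i : ℕ) + 2 ≤ (j : ℕ) ∧
          r = FreeGroup.of i * FreeGroup.of j * (FreeGroup.of j * FreeGroup.of i)⁻¹) }

/-- The braid group on `n` strands, presented by the Artin generators and the
braid and far-commutation relations. -/
def BraidGroup (n : ℕ) : Type := PresentedGroup (braidRels n)

instance (n : ℕ) : Group (BraidGroup n) :=
  inferInstanceAs (Group (PresentedGroup (braidRels n)))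

/-- The Artin generator `σ_k` (1-indexed, so `1 ≤ k ≤ n - 1`) of the braid group
`B_n`.  Out-of-range indices give the junk value `1`. -/
def braidGen (n k : ℕ) : BraidGroup n :=
  if h : k - 1 < n - 1 then PresentedGroup.of (⟨k - 1, h⟩ : Fin (n - 1)) else 1

/-- The transpositions corresponding to the Artin generators. -/
def braidPermGen (n : ℕ) (i : Fin (n - 1)) : Equiv.Perm (Fin n) :=
  Equiv.swap ⟨(i : ℕ), by have := i.isLt; omega⟩ ⟨(i : ℕ) + 1, by have := i.isLt; omega⟩

theorem braidPermGen_rels (n : ℕ) :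
    ∀ r ∈ braidRels n, FreeGroup.lift (braidPermGen n) r = 1 := by
  rintro r (⟨i, j, hij, rfl⟩ | ⟨i, j, hij, rfl⟩) <;>
    simp only [map_mul, map_inv, FreeGroup.lift_apply_of, mul_inv_eq_one]
  · -- braid relation
    have hi := i.isLt
    have hj := j.isLt
    unfold braidPermGen
    set a : Fin n := ⟨(i : ℕ), by omega⟩
    set b : Fin n := ⟨(i : ℕ) + 1, by omega⟩
    set c : Fin n := ⟨(j : ℕ) + 1, by omega⟩
    have hb : (⟨(j : ℕ), by omega⟩ : Fin n) = b := by simp [b, Fin.ext_iff, hij]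
    rw [hb]
    have hab : a ≠ b := by simp [a, b, Fin.ext_iff]
    have hac : a ≠ c := by simp [a, c, Fin.ext_iff]; omega
    have hbc : b ≠ c := by simp [b, c, Fin.ext_iff]; omega
    have h1 : Equiv.swap b c * Equiv.swap a b * Equiv.swap b c = Equiv.swap c a :=
      Equiv.swap_mul_swap_mul_swap hab hac
    have h2 : Equiv.swap b a * Equiv.swap c b * Equiv.swap b a = Equiv.swap a c :=
      Equiv.swap_mul_swap_mul_swap hbc.symm hac.symm
    rw [Equiv.swap_comm b a, Equiv.swap_comm c b] at h2
    rw [h1, h2, Equiv.swap_comm c a]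
  · -- far commutation
    have hi := i.isLt
    have hj := j.isLt
    unfold braidPermGen
    set a : Fin n := ⟨(i : ℕ), by omega⟩
    set b : Fin n := ⟨(i : ℕ) + 1, by omega⟩
    set c : Fin n := ⟨(j : ℕ), by omega⟩
    set d : Fin n := ⟨(j : ℕ) + 1, by omega⟩
    have hdisj : (Equiv.swap a b).Disjoint (Equiv.swap c d) := by
      intro x
      by_cases hx : x = a ∨ x = b
      · right
        rcases hx with rfl | rfl <;>
          exact Equiv.swap_apply_of_ne_of_ne
            (by simp [a, b, c, d, Fin.ext_iff]; omega)
            (by simp [a, b, c, d, Fin.ext_iff]; omega)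
      · left
        push_neg at hx
        exact Equiv.swap_apply_of_ne_of_ne hx.1 hx.2
    exact hdisj.commute

/-- The natural projection `π : B_n → S_n`, sending the Artin generator `σ_i`
to the adjacent transposition `(i, i+1)`. -/
def braidPi (n : ℕ) : BraidGroup n →* Equiv.Perm (Fin n) :=
  PresentedGroup.toGroup (braidPermGen_rels n)

/-!
Once the images of `σ₁` and `σ₂` commute, the braid relation `σ₁σ₂σ₁ = σ₂σ₁σ₂` forces them to
be equal, so every abelian quotient of `B₃` is cyclic. Groups of order less than `6` have prime
order or order `4 = 2²`, hence are abelian. A nonabelian group `G` of order `6` acts on the three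
cosets of a subgroup `H` of order `2`; the kernel lies in `H`, and if it were `H` then `H` would be
a normal, hence central, subgroup with cyclic quotient, making `G` abelian. So `G` embeds into
`Perm (G ⧸ H) ≃ S₃`, and both have order `6`.
-/

open Subgroup

namespace BraidGroup

theorem braidGen_of_lt {n k : ℕ} (h : k - 1 < n - 1) :
    braidGen n k = PresentedGroup.of ⟨k - 1, h⟩ :=
  dif_pos h

theorem braidGen_mul_braidGen_mul_braidGen {n k : ℕ} (hk : 1 ≤ k) (hkn : k + 1 < n) :
    braidGen n k * braidGen n (k + 1) * braidGen n k =
      braidGen n (k + 1) * braidGen n k * braidGen n (k + 1) := by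
  rw [braidGen_of_lt (by omega), braidGen_of_lt (by omega)]
  exact PresentedGroup.mk_eq_mk_of_mul_inv_mem (Or.inl ⟨_, _, by simp only; omega, rfl⟩)

theorem closure_braidGen_three : closure {braidGen 3 1, braidGen 3 2} = ⊤ := by
  refine Eq.trans ?_ (PresentedGroup.closure_range_of (braidRels 3))
  congr 1
  ext x
  simp only [Set.mem_insert_iff, Set.mem_singleton_iff]
  constructor
  · rintro (rfl | rfl)
    exacts [⟨0, rfl⟩, ⟨1, rfl⟩]
  · rintro ⟨i, rfl⟩
    fin_cases i
    exacts [Or.inl rfl, Or.inr rfl]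

end BraidGroup

theorem eq_of_commute_of_mul_mul_eq {M : Type*} [CancelMonoid M] {a b : M} (hab : Commute a b)
    (h : a * b * a = b * a * b) : a = b := by
  apply mul_right_cancel (b := a * b)
  calc a * (a * b) = a * b * a := by rw [mul_assoc, hab.eq]
    _ = b * a * b := h
    _ = b * (a * b) := mul_assoc _ _ _

theorem BraidGroup.isCyclic_of_surjective_three {G : Type*} [Group G] [IsMulCommutative G]
    (f : BraidGroup 3 →* G) (hf : Function.Surjective f) : IsCyclic G := by
  have hσ : f (braidGen 3 1) = f (braidGen 3 2) :=
    eq_of_commute_of_mul_mul_eq (Std.Commutative.comm _ _) <| by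
      simpa only [map_mul] using congrArg f (braidGen_mul_braidGen_mul_braidGen le_rfl (by simp))
  have hgen : ⊤ ≤ zpowers (f (braidGen 3 1)) := by
    rw [← MonoidHom.range_eq_top.mpr hf, MonoidHom.range_eq_map, ← closure_braidGen_three,
      MonoidHom.map_closure, closure_le, Set.image_pair, hσ, Set.pair_eq_singleton,
      Set.singleton_subset_iff]
    exact mem_zpowers _
  exact ⟨f (braidGen 3 1), fun g => hgen (mem_top g)⟩

section

variable {G : Type*} [Group G]

theorem isMulCommutative_of_card_lt_six [Finite G] (hG : Nat.card G < 6) :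
    IsMulCommutative G := by
  have := Nat.card_pos (α := G)
  have : Fact (Nat.Prime 2) := ⟨Nat.prime_two⟩
  have : Fact (Nat.Prime 3) := ⟨Nat.prime_three⟩
  have : Fact (Nat.Prime 5) := ⟨Nat.prime_five⟩
  interval_cases h : Nat.card G
  · exact (isCyclic_of_card_dvd_prime (p := 2) (by rw [h]; norm_num)).isMulCommutative
  · exact (isCyclic_of_card_dvd_prime (p := 2) (by rw [h])).isMulCommutative
  · exact (isCyclic_of_card_dvd_prime (p := 3) (by rw [h])).isMulCommutative
  · exact IsPGroup.isMulCommutative_of_card_eq_prime_sq (p := 2) h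
  · exact (isCyclic_of_card_dvd_prime (p := 5) (by rw [h])).isMulCommutative

theorem Subgroup.le_center_of_card_eq_two {H : Subgroup G} [hN : H.Normal]
    (hH : Nat.card H = 2) : H ≤ center G := by
  intro x hx
  rw [mem_center_iff]
  intro g
  by_cases hx1 : x = 1
  · simp [hx1]
  obtain ⟨y, -, hy⟩ := (Nat.card_eq_two_iff' (1 : H)).mp hH
  have hxy : (⟨x, hx⟩ : H) = y := hy _ (by simpa [Subtype.ext_iff] using hx1)
  have hconj : (⟨g * x * g⁻¹, hN.conj_mem x hx g⟩ : H) = y :=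
    hy _ (by simpa [Subtype.ext_iff] using hx1)
  have : g * x * g⁻¹ = x := congrArg Subtype.val (hconj.trans hxy.symm)
  exact (eq_mul_inv_iff_mul_eq.mp this.symm).symm

theorem Subgroup.isMulCommutative_of_card_eq_two_of_isCyclic_quotient {H : Subgroup G} [H.Normal]
    [IsCyclic (G ⧸ H)] (hH : Nat.card H = 2) : IsMulCommutative G :=
  (QuotientGroup.mk' H).isMulCommutative_of_isCyclic_of_ker_le_center <| by
    rw [QuotientGroup.ker_mk']
    exact H.le_center_of_card_eq_two hH

theorem Subgroup.ker_toPermHom_eq_bot_of_card_eq_two {H : Subgroup G} (hH : Nat.card H = 2)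
    (hindex : H.index.Prime) (hG : ¬ IsMulCommutative G) :
    (MulAction.toPermHom G (G ⧸ H)).ker = ⊥ := by
  have hle : (MulAction.toPermHom G (G ⧸ H)).ker ≤ H := H.normalCore_eq_ker ▸ H.normalCore_le
  rcases (Nat.dvd_prime Nat.prime_two).mp (hH ▸ card_dvd_of_le hle) with hcard | hcard
  · exact card_eq_one.mp hcard
  · have : Finite H := Nat.finite_of_card_ne_zero (by omega)
    have hker := eq_of_le_of_card_ge hle (by rw [hcard, hH])
    have : H.Normal := hker ▸ MonoidHom.normal_ker _
    have : Fact H.index.Prime := ⟨hindex⟩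
    have : IsCyclic (G ⧸ H) := isCyclic_of_prime_card H.index_eq_card.symm
    exact absurd (H.isMulCommutative_of_card_eq_two_of_isCyclic_quotient hH) hG

theorem nonempty_mulEquiv_perm_fin_three_of_card_eq_six [Finite G] (h6 : Nat.card G = 6)
    (hG : ¬ IsMulCommutative G) : Nonempty (G ≃* Equiv.Perm (Fin 3)) := by
  have : Fact (Nat.Prime 2) := ⟨Nat.prime_two⟩
  obtain ⟨x, hx⟩ := exists_prime_orderOf_dvd_card' (G := G) 2 (by rw [h6]; norm_num)
  have hH : Nat.card (zpowers x) = 2 := by rw [Nat.card_zpowers, hx]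
  have hindex : (zpowers x).index = 3 := by
    have := (zpowers x).card_mul_index
    rw [hH, h6] at this
    omega
  have hinj : Function.Injective (MulAction.toPermHom G (G ⧸ zpowers x)) :=
    (MonoidHom.ker_eq_bot_iff _).mp <|
      (zpowers x).ker_toPermHom_eq_bot_of_card_eq_two hH (hindex ▸ Nat.prime_three) hG
  have hQ : Nat.card (G ⧸ zpowers x) = 3 := (zpowers x).index_eq_card ▸ hindex
  have hbij : Function.Bijective (MulAction.toPermHom G (G ⧸ zpowers x)) :=
    (Nat.bijective_iff_injective_and_card _).mpr ⟨hinj, by rw [Nat.card_perm, hQ, h6]; rfl⟩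
  exact ⟨(MulEquiv.ofBijective _ hbij).trans (Finite.equivFinOfCardEq hQ).permCongrHom⟩

end

/-- The smallest non-cyclic quotient of `B_3` has order at least `6`, and any
non-cyclic quotient of order `6` is isomorphic to `S_3`. -/
theorem braid_three_smallest_noncyclic_quotient
    (G : Type) [Group G] [Finite G]
    (f : BraidGroup 3 →* G) (hf : Function.Surjective f) (hG : ¬ IsCyclic G) :
    6 ≤ Nat.card G ∧ (Nat.card G = 6 → Nonempty (G ≃* Equiv.Perm (Fin 3))) := by
  have hnc : ¬ IsMulCommutative G := fun _ => hG (BraidGroup.isCyclic_of_surjective_three f hf)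
  refine ⟨?_, fun h6 => nonempty_mulEquiv_perm_fin_three_of_card_eq_six h6 hnc⟩
  by_contra hlt
  exact hnc (isMulCommutative_of_card_lt_six (not_le.mp hlt))
end

section
/- Let B_3 be the braid group on 3 strands. Any two surjective group homomorphisms f, f' : B_3 → Equiv.Perm (Fin 3) are related by a conjugation of S_3: there exists g ∈ Equiv.Perm (Fin 3) such that f'(b) = g * f(b) * g⁻¹ for all b ∈ B_3. -/
/-!
The braid relation `σ₁σ₂σ₁ = σ₂σ₁σ₂` forces the images `x, y ∈ S₃` of the two Artin generators
either to coincide, which is impossible for an epimorphism since `S₃` is not cyclic, or to be two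
distinct transpositions; all such pairs are conjugate to `((0 1), (1 2))`. So every epimorphism
`B₃ → S₃` is the standard projection followed by an inner automorphism.
-/

open Equiv

theorem PresentedGroup.range_le_zpowers_of_forall_of_eq {α G : Type*} [Group G]
    {rels : Set (FreeGroup α)} (f : PresentedGroup rels →* G) {x : G}
    (h : ∀ a, f (PresentedGroup.of a) = x) : f.range ≤ Subgroup.zpowers x := by
  rw [MonoidHom.range_eq_map, ← PresentedGroup.closure_range_of rels, MonoidHom.map_closure,
    Subgroup.closure_le]
  rintro _ ⟨_, ⟨a, rfl⟩, rfl⟩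
  exact h a ▸ Subgroup.mem_zpowers x

-- Stated over `PresentedGroup (braidRels n)`: over `BraidGroup n`, `f (.of i)` type-checks only
-- after unfolding `BraidGroup`, and `simp` then cannot rewrite with `map_mul`.
theorem BraidGroup.map_of_braid_rel {G : Type*} [Group G] {n : ℕ}
    (f : PresentedGroup (braidRels n) →* G) {i j : Fin (n - 1)} (hij : (j : ℕ) = i + 1) :
    f (.of i) * f (.of j) * f (.of i) = f (.of j) * f (.of i) * f (.of j) := by
  simp only [← map_mul]
  exact congrArg f (PresentedGroup.mk_eq_mk_of_mul_inv_mem (Or.inl ⟨i, j, hij, rfl⟩))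

theorem Equiv.Perm.fin_three_zpowers_ne_top (x : Perm (Fin 3)) : Subgroup.zpowers x ≠ ⊤ := by
  intro hx
  have hmem (σ : Perm (Fin 3)) : σ ∈ Subgroup.zpowers x := hx ▸ Subgroup.mem_top σ
  obtain ⟨m, hm⟩ := hmem (swap 0 1)
  obtain ⟨n, hn⟩ := hmem (swap 1 2)
  have hcomm : Commute (swap 0 1 : Perm (Fin 3)) (swap 1 2) :=
    hm ▸ hn ▸ Commute.zpow_zpow_self x m n
  exact absurd hcomm.eq (by decide)

theorem Equiv.Perm.fin_three_eq_or_conj_of_braid_rel {x y : Perm (Fin 3)}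
    (h : x * y * x = y * x * y) :
    x = y ∨ ∃ g, x = g * braidPermGen 3 0 * g⁻¹ ∧ y = g * braidPermGen 3 1 * g⁻¹ := by
  revert x y
  decide

theorem BraidGroup.exists_eq_conj_comp_braidPi_of_surjective (f : BraidGroup 3 →* Perm (Fin 3))
    (hf : Function.Surjective f) :
    ∃ g : Perm (Fin 3), f = (MulAut.conj g).toMonoidHom.comp (braidPi 3) := by
  obtain hxy | ⟨g, h0, h1⟩ :=
    Perm.fin_three_eq_or_conj_of_braid_rel (BraidGroup.map_of_braid_rel f (i := 0) (j := 1) rfl)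
  · refine absurd (top_le_iff.mp ?_) (Perm.fin_three_zpowers_ne_top (f (PresentedGroup.of 0)))
    rw [← MonoidHom.range_eq_top.mpr hf]
    refine PresentedGroup.range_le_zpowers_of_forall_of_eq f fun a => ?_
    fin_cases a
    exacts [rfl, hxy.symm]
  · refine ⟨g, PresentedGroup.ext fun a => ?_⟩
    fin_cases a
    exacts [h0, h1]

/-- Any two epimorphisms `B_3 → S_3` are related by a conjugation of `S_3`. -/
theorem braid_three_epimorphisms_to_perm_three_conjugate
    (f f' : BraidGroup 3 →* Equiv.Perm (Fin 3))
    (hf : Function.Surjective f) (hf' : Function.Surjective f') :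
    ∃ g : Equiv.Perm (Fin 3), ∀ b : BraidGroup 3, f' b = g * f b * g⁻¹ := by
  obtain ⟨g, rfl⟩ := BraidGroup.exists_eq_conj_comp_braidPi_of_surjective f hf
  obtain ⟨g', rfl⟩ := BraidGroup.exists_eq_conj_comp_braidPi_of_surjective f' hf'
  refine ⟨g' * g⁻¹, fun b => ?_⟩
  simp only [MulEquiv.toMonoidHom_eq_coe, MonoidHom.coe_comp, MonoidHom.coe_coe,
    Function.comp_apply, MulAut.conj_apply]
  group
end

section
/- Let B_4 be the braid group on 4 strands. Any two surjective group homomorphisms f, f' : B_4 → Equiv.Perm (Fin 3) are related by a conjugation of S_3: there exists g ∈ Equiv.Perm (Fin 3) such that f'(b) = g * f(b) * g⁻¹ for all b ∈ B_4. -/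
/-!
A homomorphism `f : B₄ → S₃` is determined by the images `a, b, c` of `σ₁, σ₂, σ₃`, which satisfy
`aba = bab`, `bcb = cbc` and `ac = ca`. A finite check in `S₃` shows that such a triple either is
constant, or is conjugate to `((0 1), (1 2), (0 1))`. A constant triple generates a cyclic subgroup,
so it cannot come from an epimorphism onto the non-cyclic group `S₃`. Hence every epimorphism is
conjugate to the one sending `σ₁, σ₂, σ₃` to `(0 1), (1 2), (0 1)`, and any two are conjugate to
each other.
-/

open Equiv

theorem PresentedGroup.isCyclic_of_surjective_of_map_of_eq {α G : Type*} [Group G]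
    {rels : Set (FreeGroup α)} (φ : PresentedGroup rels →* G) (hφ : Function.Surjective φ)
    (s : G) (hs : ∀ a, φ (PresentedGroup.of a) = s) : IsCyclic G := by
  refine isCyclic_iff_exists_zpowers_eq_top.mpr ⟨s, eq_top_iff.mpr fun g _ => ?_⟩
  obtain ⟨x, rfl⟩ := hφ g
  exact PresentedGroup.generated_by rels ((Subgroup.zpowers s).comap φ)
    (fun a => by simp [hs a]) x

namespace BraidGroup

variable {n : ℕ} {G : Type*} [Group G]

theorem hom_ext {φ ψ : BraidGroup n →* G}
    (h : ∀ i, φ (PresentedGroup.of i) = ψ (PresentedGroup.of i)) : φ = ψ :=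
  PresentedGroup.ext h

theorem map_of_braid (φ : BraidGroup n →* G) {i j : Fin (n - 1)} (hij : (j : ℕ) = i + 1) :
    φ (PresentedGroup.of i) * φ (PresentedGroup.of j) * φ (PresentedGroup.of i) =
      φ (PresentedGroup.of j) * φ (PresentedGroup.of i) * φ (PresentedGroup.of j) := by
  set x : BraidGroup n := PresentedGroup.of i
  set y : BraidGroup n := PresentedGroup.of j
  have h : x * y * x * (y * x * y)⁻¹ = 1 := PresentedGroup.one_of_mem (Or.inl ⟨i, j, hij, rfl⟩)
  simpa only [map_mul] using congrArg φ (mul_inv_eq_one.mp h)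

theorem map_of_commute (φ : BraidGroup n →* G) {i j : Fin (n - 1)} (hij : (i : ℕ) + 2 ≤ j) :
    φ (PresentedGroup.of i) * φ (PresentedGroup.of j) =
      φ (PresentedGroup.of j) * φ (PresentedGroup.of i) := by
  set x : BraidGroup n := PresentedGroup.of i
  set y : BraidGroup n := PresentedGroup.of j
  have h : x * y * (y * x)⁻¹ = 1 := PresentedGroup.one_of_mem (Or.inr ⟨i, j, hij, rfl⟩)
  simpa only [map_mul] using congrArg φ (mul_inv_eq_one.mp h)

end BraidGroup

set_option synthInstance.maxSize 1000 in
theorem Equiv.Perm.fin_three_braid_triple_eq_or_conj : ∀ a b c : Perm (Fin 3),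
    a * b * a = b * a * b → b * c * b = c * b * c → a * c = c * a →
      (a = b ∧ b = c) ∨
        ∃ g : Perm (Fin 3), a = g * swap 0 1 * g⁻¹ ∧ b = g * swap 1 2 * g⁻¹ ∧
          c = g * swap 0 1 * g⁻¹ := by
  decide

theorem BraidGroup.exists_forall_map_of_eq_conj_of_surjective (f : BraidGroup 4 →* Perm (Fin 3))
    (hf : Function.Surjective f) :
    ∃ g : Perm (Fin 3), ∀ i,
      f (PresentedGroup.of i) = g * ![swap 0 1, swap 1 2, swap 0 1] i * g⁻¹ := by
  rcases Perm.fin_three_braid_triple_eq_or_conj _ _ _ (map_of_braid f (i := 0) (j := 1) rfl)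
      (map_of_braid f (i := 1) (j := 2) rfl) (map_of_commute f (i := 0) (j := 2) le_rfl)
    with ⟨h01, h12⟩ | ⟨g, h0, h1, h2⟩
  · have hconst : ∀ i, f (PresentedGroup.of i) = f (PresentedGroup.of 0) := by
      intro i
      fin_cases i
      exacts [rfl, h01.symm, (h01.trans h12).symm]
    have := PresentedGroup.isCyclic_of_surjective_of_map_of_eq f hf _ hconst
    simp [Perm.isCyclic_iff_card_le_two] at this
  · exact ⟨g, fun i => by fin_cases i <;> assumption⟩

/-- Any two epimorphisms `B_4 → S_3` are related by a conjugation of `S_3`. -/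
theorem braid_four_epimorphisms_to_perm_three_conjugate
    (f f' : BraidGroup 4 →* Equiv.Perm (Fin 3))
    (hf : Function.Surjective f) (hf' : Function.Surjective f') :
    ∃ g : Equiv.Perm (Fin 3), ∀ b : BraidGroup 4, f' b = g * f b * g⁻¹ := by
  obtain ⟨g, hg⟩ := BraidGroup.exists_forall_map_of_eq_conj_of_surjective f hf
  obtain ⟨g', hg'⟩ := BraidGroup.exists_forall_map_of_eq_conj_of_surjective f' hf'
  have hconj : f' = (MulAut.conj (g' * g⁻¹)).toMonoidHom.comp f :=
    BraidGroup.hom_ext fun i => by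
      change _ = g' * g⁻¹ * f _ * (g' * g⁻¹)⁻¹
      rw [hg, hg']
      group
  exact ⟨g' * g⁻¹, DFunLike.congr_fun hconj⟩
end

section
/- Let n ≥ 5, let B_n be the braid group on n strands, and let f : B_n → G be a group homomorphism into a group G whose range is not cyclic. Then the n(n−1)/2 images f(ρ_{i,j}) of the Birman–Ko–Lee generators are pairwise distinct: for 1 ≤ i < j ≤ n and 1 ≤ k < l ≤ n with (i,j) ≠ (k,l), one has f(ρ_{i,j}) ≠ f(ρ_{k,l}). -/
/-- The conjugating word `σ_{j-1} σ_{j-2} ⋯ σ_{i+1}` (1-indexed) appearing in the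
definition of the Birman--Ko--Lee generators. -/
def bklWord (n i j : ℕ) : BraidGroup n :=
  ((List.range (j - i - 1)).map fun t => braidGen n (j - 1 - t)).prod

/-- The Birman--Ko--Lee generator `ρ_{i,j} = (σ_{j-1} ⋯ σ_{i+1}) σ_i (σ_{j-1} ⋯ σ_{i+1})⁻¹`
of the braid group `B_n` (1-indexed, `1 ≤ i < j ≤ n`).  Note `ρ_{i,i+1} = σ_i`. -/
def bklGen (n i j : ℕ) : BraidGroup n :=
  bklWord n i j * braidGen n i * (bklWord n i j)⁻¹

/-!
Conjugation by `σ_x` turns `ρ_{i,j}` into `ρ_{s i, s j}` for the transposition `s = (x x+1)`,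
provided `x` is not an endpoint.  Applying `f`, an equality `f ρ_{i,j} = f ρ_{k,l}` can thus be
pushed down until the endpoints fill `{1,2,3}` or `{1,2,3,4}`.  In each of the six resulting
configurations the braid and far-commutation relations force `f σ_m = f σ_{m+1}` for some `m`,
and then all Artin generators have the same image, so the range of `f` is cyclic.
-/

section BraidRelation

variable {G : Type*} [Group G] {x y z w : G}

theorem eq_of_braid_of_commute (hb : x * y * x = y * x * y) (hc : Commute x y) : x = y := by
  rw [hc.eq, mul_assoc, mul_assoc] at hb
  exact mul_left_cancel (mul_left_cancel hb)

theorem inv_mul_mul_eq_of_braid (hb : y * w * y = w * y * w) : y⁻¹ * w * y = w * y * w⁻¹ := by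
  rw [eq_mul_inv_iff_mul_eq]
  calc y⁻¹ * w * y * w = y⁻¹ * (w * y * w) := by group
    _ = y⁻¹ * (y * w * y) := by rw [hb]
    _ = w * y := by group

theorem conj_conj_eq_of_braid (hb : x * y * x = y * x * y) : x * (y * x * y⁻¹) * x⁻¹ = y :=
  calc x * (y * x * y⁻¹) * x⁻¹ = y * x * y * y⁻¹ * x⁻¹ := by rw [← hb]; group
    _ = y := by group

theorem commute_conj_of_braid (hb : x * y * x = y * x * y) (hyz : Commute y z) :
    Commute x (y * (x * z * x⁻¹) * y⁻¹) := by
  have hx : y * x * y * (y * x)⁻¹ = x := by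
    rw [mul_inv_eq_iff_eq_mul, ← hb, mul_assoc]
  have := hyz.conj (y * x)
  rw [hx] at this
  convert this using 1
  group

theorem commute_of_commute_conj_of_braid (hb : y * w * y = w * y * w) (hxw : Commute x w)
    (h : Commute (y * x * y⁻¹) w) : Commute x y := by
  have hx : y⁻¹ * (y * x * y⁻¹) * y⁻¹⁻¹ = x := by group
  have h' := h.conj y⁻¹
  rw [hx, inv_inv, inv_mul_mul_eq_of_braid hb] at h'
  rw [← Commute.conj_iff w, hxw.symm.mul_inv_cancel]
  exact h'

theorem eq_of_conj_conj_eq_of_braid (hb : y * z * y = z * y * z)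
    (h : z * (y * x * y⁻¹) * z⁻¹ = y) : x = z := by
  have h' : y * x * y⁻¹ = z⁻¹ * y * z :=
    calc y * x * y⁻¹ = z⁻¹ * (z * (y * x * y⁻¹) * z⁻¹) * z := by group
      _ = z⁻¹ * y * z := by rw [h]
  rw [inv_mul_mul_eq_of_braid hb.symm] at h'
  exact mul_left_cancel (mul_right_cancel h')

end BraidRelation

theorem PresentedGroup.isCyclic_range_of_forall_map_of_eq {α G : Type*} [Group G]
    {rels : Set (FreeGroup α)} (f : PresentedGroup rels →* G) (c : G)
    (h : ∀ a, f (PresentedGroup.of a) = c) : IsCyclic f.range := by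
  refine Subgroup.isCyclic_of_le (H' := Subgroup.zpowers c) ?_
  rintro _ ⟨x, rfl⟩
  refine PresentedGroup.generated_by rels ((Subgroup.zpowers c).comap f) (fun a => ?_) x
  simp [h]

theorem swap_self_succ_apply_of_ne {x p : ℕ} (h : p ≠ x) :
    p = x + 1 ∧ Equiv.swap x (x + 1) p = x ∨ p ≠ x + 1 ∧ Equiv.swap x (x + 1) p = p := by
  rcases eq_or_ne p (x + 1) with rfl | h'
  · exact Or.inl ⟨rfl, Equiv.swap_apply_right _ _⟩
  · exact Or.inr ⟨h', Equiv.swap_apply_of_ne_of_ne h h'⟩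

section Braid

variable {n : ℕ}

theorem braidGen_of_lt {k : ℕ} (h : k - 1 < n - 1) :
    braidGen n k = PresentedGroup.of ⟨k - 1, h⟩ :=
  dif_pos h

theorem braidGen_of_le {k : ℕ} (h : n ≤ k) : braidGen n k = 1 :=
  dif_neg (by omega)

theorem braidGen_braid {i : ℕ} (hi : 1 ≤ i) (hin : i + 2 ≤ n) :
    braidGen n i * braidGen n (i + 1) * braidGen n i =
      braidGen n (i + 1) * braidGen n i * braidGen n (i + 1) := by
  rw [braidGen_of_lt (by omega : i - 1 < n - 1), braidGen_of_lt (by omega : i + 1 - 1 < n - 1)]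
  exact PresentedGroup.mk_eq_mk_of_mul_inv_mem (Or.inl ⟨_, _, by simp; omega, rfl⟩)

theorem commute_braidGen {i j : ℕ} (hi : 1 ≤ i) (hij : i + 2 ≤ j) :
    Commute (braidGen n i) (braidGen n j) := by
  by_cases hj : j - 1 < n - 1
  · rw [braidGen_of_lt (by omega : i - 1 < n - 1), braidGen_of_lt hj]
    exact PresentedGroup.mk_eq_mk_of_mul_inv_mem (Or.inr ⟨_, _, by simp; omega, rfl⟩)
  · rw [braidGen_of_le (by omega : n ≤ j)]
    exact Commute.one_right _

theorem bklGen_self_succ (i : ℕ) : bklGen n i (i + 1) = braidGen n i := by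
  simp [bklGen, bklWord]

theorem bklGen_succ {i j : ℕ} (hij : i < j) :
    bklGen n i (j + 1) = braidGen n j * bklGen n i j * (braidGen n j)⁻¹ := by
  have hword : bklWord n i (j + 1) = braidGen n j * bklWord n i j := by
    rw [bklWord, show j + 1 - i - 1 = j - i - 1 + 1 by omega, List.range_succ_eq_map,
      List.map_cons, List.prod_cons, List.map_map, bklWord]
    congr 2
    refine List.map_congr_left fun t ht => ?_
    simp only [Function.comp_apply]
    congr 1
    simp only [List.mem_range] at ht
    omega
  simp only [bklGen, hword]
  group

theorem bklGen_add_two (i : ℕ) :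
    bklGen n i (i + 2) = braidGen n (i + 1) * braidGen n i * (braidGen n (i + 1))⁻¹ := by
  rw [bklGen_succ (Nat.lt_succ_self i), bklGen_self_succ]

theorem commute_braidGen_bklGen_of_add_two_le {k i j : ℕ} (hk : 1 ≤ k) (hki : k + 2 ≤ i)
    (hij : i < j) : Commute (braidGen n k) (bklGen n i j) := by
  induction j, hij using Nat.le_induction with
  | base => rw [bklGen_self_succ]; exact commute_braidGen hk hki
  | succ j hij ih =>
    have hkj : Commute (braidGen n k) (braidGen n j) := commute_braidGen hk (by omega)
    rw [bklGen_succ hij]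
    exact (hkj.mul_right ih).mul_right hkj.inv_right

theorem commute_braidGen_bklGen_of_lt {k i j : ℕ} (hi : 1 ≤ i) (hij : i < j) (hjk : j < k) :
    Commute (braidGen n k) (bklGen n i j) := by
  induction j, hij using Nat.le_induction with
  | base => rw [bklGen_self_succ]; exact (commute_braidGen hi (by omega)).symm
  | succ j hij ih =>
    have hkj : Commute (braidGen n k) (braidGen n j) := (commute_braidGen (by omega) hjk).symm
    rw [bklGen_succ hij]
    exact (hkj.mul_right (ih (by omega))).mul_right hkj.inv_right

theorem commute_braidGen_bklGen_of_lt_of_lt {k i j : ℕ} (hi : 1 ≤ i) (hik : i < k)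
    (hkj : k + 1 < j) (hjn : j ≤ n) : Commute (braidGen n k) (bklGen n i j) := by
  induction j, hkj using Nat.le_induction with
  | base =>
    rw [bklGen_succ (by omega), bklGen_succ hik]
    exact commute_conj_of_braid (braidGen_braid (by omega) hjn)
      (commute_braidGen_bklGen_of_lt hi hik (Nat.lt_succ_self k))
  | succ j hj ih =>
    have hkj : Commute (braidGen n k) (braidGen n j) := commute_braidGen (by omega) (by omega)
    rw [bklGen_succ (by omega)]
    exact (hkj.mul_right (ih (by omega))).mul_right hkj.inv_right

theorem braidGen_conj_bklGen_self {i j : ℕ} (hi : 1 ≤ i) (hij : i + 1 < j) (hjn : j ≤ n) :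
    braidGen n i * bklGen n i j * (braidGen n i)⁻¹ = bklGen n (i + 1) j := by
  induction j, hij using Nat.le_induction with
  | base =>
    rw [bklGen_add_two, bklGen_self_succ]
    exact conj_conj_eq_of_braid (braidGen_braid hi hjn)
  | succ j hij ih =>
    have hij' : braidGen n i * braidGen n j = braidGen n j * braidGen n i :=
      (commute_braidGen hi hij).eq
    rw [bklGen_succ (by omega), bklGen_succ hij, ← ih (by omega)]
    calc braidGen n i * (braidGen n j * bklGen n i j * (braidGen n j)⁻¹) * (braidGen n i)⁻¹
        = braidGen n i * braidGen n j * bklGen n i j * (braidGen n i * braidGen n j)⁻¹ := by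
          group
      _ = braidGen n j * braidGen n i * bklGen n i j * (braidGen n j * braidGen n i)⁻¹ := by
          rw [hij']
      _ = _ := by group

theorem braidGen_conj_bklGen_swap {x i j : ℕ} (hx : 1 ≤ x) (hi : 1 ≤ i) (hij : i < j)
    (hjn : j ≤ n) (hix : i ≠ x) (hjx : j ≠ x) :
    braidGen n x * bklGen n (Equiv.swap x (x + 1) i) (Equiv.swap x (x + 1) j) *
      (braidGen n x)⁻¹ = bklGen n i j := by
  rcases eq_or_ne i (x + 1) with rfl | hi'
  · rw [Equiv.swap_apply_right, Equiv.swap_apply_of_ne_of_ne hjx (by omega)]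
    exact braidGen_conj_bklGen_self hx (by omega) hjn
  rcases eq_or_ne j (x + 1) with rfl | hj'
  · rw [Equiv.swap_apply_right, Equiv.swap_apply_of_ne_of_ne hix hi']
    exact (bklGen_succ (by omega)).symm
  rw [Equiv.swap_apply_of_ne_of_ne hix hi', Equiv.swap_apply_of_ne_of_ne hjx hj']
  refine Commute.mul_inv_cancel ?_
  rcases lt_or_ge j x with hjx' | hxj
  · exact commute_braidGen_bklGen_of_lt hi hij hjx'
  rcases lt_or_ge (x + 1) i with hxi | hix'
  · exact commute_braidGen_bklGen_of_add_two_le hx hxi hij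
  · exact commute_braidGen_bklGen_of_lt_of_lt hi (by omega) (by omega) hjn

end Braid

section Images

variable {n : ℕ} {G : Type*} [Group G] (f : BraidGroup n →* G)

def IdentifiesAdjacentGens : Prop :=
  ∃ m, 1 ≤ m ∧ m + 2 ≤ n ∧ f (braidGen n m) = f (braidGen n (m + 1))

theorem map_braidGen_braid {i : ℕ} (hi : 1 ≤ i) (hin : i + 2 ≤ n) :
    f (braidGen n i) * f (braidGen n (i + 1)) * f (braidGen n i) =
      f (braidGen n (i + 1)) * f (braidGen n i) * f (braidGen n (i + 1)) := by
  simpa only [map_mul] using congrArg f (braidGen_braid hi hin)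

theorem commute_map_braidGen {i j : ℕ} (hi : 1 ≤ i) (hij : i + 2 ≤ j) :
    Commute (f (braidGen n i)) (f (braidGen n j)) :=
  (commute_braidGen hi hij).map f

theorem map_braidGen_eq_succ_of_commute {i : ℕ} (hi : 1 ≤ i) (hin : i + 2 ≤ n)
    (h : Commute (f (braidGen n i)) (f (braidGen n (i + 1)))) :
    f (braidGen n i) = f (braidGen n (i + 1)) :=
  eq_of_braid_of_commute (map_braidGen_braid f hi hin) h

theorem map_braidGen_eq_succ_iff {i : ℕ} (hi : 1 ≤ i) (hin : i + 3 ≤ n) :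
    f (braidGen n i) = f (braidGen n (i + 1)) ↔
      f (braidGen n (i + 1)) = f (braidGen n (i + 2)) := by
  have hc := commute_map_braidGen f hi (le_refl (i + 2))
  constructor
  · intro h
    rw [h] at hc
    exact map_braidGen_eq_succ_of_commute f (by omega) (by omega) hc
  · intro h
    rw [← h] at hc
    exact map_braidGen_eq_succ_of_commute f hi (by omega) hc

theorem map_braidGen_eq_map_braidGen_one (hadj : IdentifiesAdjacentGens f) {t : ℕ}
    (ht : 1 ≤ t) (htn : t < n) : f (braidGen n t) = f (braidGen n 1) := by
  obtain ⟨m, hm, hmn, hfm⟩ := hadj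
  have hsucc : ∀ s, 1 ≤ s → s + 2 ≤ n →
      (f (braidGen n s) = f (braidGen n (s + 1)) ↔ f (braidGen n 1) = f (braidGen n 2)) := by
    intro s hs
    induction s, hs using Nat.le_induction with
    | base => exact fun _ => Iff.rfl
    | succ s hs ih =>
      exact fun hsn => (map_braidGen_eq_succ_iff f hs hsn).symm.trans (ih (by omega))
  induction t, ht using Nat.le_induction with
  | base => rfl
  | succ t ht ih =>
    have hft : f (braidGen n t) = f (braidGen n (t + 1)) :=
      (hsucc t ht (by omega)).mpr ((hsucc m hm hmn).mp hfm)
    rw [← hft, ih (by omega)]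

theorem isCyclic_range_of_identifiesAdjacentGens (hadj : IdentifiesAdjacentGens f) :
    IsCyclic f.range :=
  PresentedGroup.isCyclic_range_of_forall_map_of_eq f (f (braidGen n 1)) fun a => by
    rw [← map_braidGen_eq_map_braidGen_one f hadj (Nat.le_add_left 1 a) (by omega),
      braidGen_of_lt (by simp)]
    rfl

theorem map_bklGen_swap_eq {x i j k l : ℕ} (hx : 1 ≤ x) (hi : 1 ≤ i) (hij : i < j) (hjn : j ≤ n)
    (hk : 1 ≤ k) (hkl : k < l) (hln : l ≤ n) (hix : i ≠ x) (hjx : j ≠ x) (hkx : k ≠ x)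
    (hlx : l ≠ x) (h : f (bklGen n i j) = f (bklGen n k l)) :
    f (bklGen n (Equiv.swap x (x + 1) i) (Equiv.swap x (x + 1) j)) =
      f (bklGen n (Equiv.swap x (x + 1) k) (Equiv.swap x (x + 1) l)) := by
  rw [← braidGen_conj_bklGen_swap hx hi hij hjn hix hjx,
    ← braidGen_conj_bklGen_swap hx hk hkl hln hkx hlx] at h
  simpa only [map_mul, map_inv, mul_left_inj, mul_right_inj] using h

theorem map_braidGen_eq_succ_of_map_eq_bklGen_add_two {i : ℕ} (hi : 1 ≤ i) (hin : i + 2 ≤ n)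
    (h : f (braidGen n i) = f (bklGen n i (i + 2))) :
    f (braidGen n i) = f (braidGen n (i + 1)) := by
  rw [bklGen_add_two, map_mul, map_mul, map_inv, eq_mul_inv_iff_mul_eq] at h
  exact map_braidGen_eq_succ_of_commute f hi hin h

theorem map_braidGen_eq_succ_of_map_bklGen_add_two_eq {i : ℕ}
    (h : f (bklGen n i (i + 2)) = f (braidGen n (i + 1))) :
    f (braidGen n i) = f (braidGen n (i + 1)) := by
  rw [bklGen_add_two, map_mul, map_mul, map_inv, mul_inv_eq_iff_eq_mul] at h
  exact mul_left_cancel h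

theorem map_braidGen_eq_succ_of_map_eq_add_two {i : ℕ} (hi : 1 ≤ i) (hin : i + 4 ≤ n)
    (h : f (braidGen n i) = f (braidGen n (i + 2))) :
    f (braidGen n (i + 2)) = f (braidGen n (i + 3)) := by
  have hc := commute_map_braidGen f hi (show i + 2 ≤ i + 3 by omega)
  rw [h] at hc
  exact map_braidGen_eq_succ_of_commute f (by omega) (by omega) hc

theorem map_braidGen_eq_succ_of_map_bklGen_add_two_eq_succ {i : ℕ} (hi : 1 ≤ i)
    (hin : i + 4 ≤ n) (h : f (bklGen n i (i + 2)) = f (bklGen n (i + 1) (i + 3))) :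
    f (braidGen n (i + 1)) = f (braidGen n (i + 2)) := by
  have hc : Commute (f (bklGen n i (i + 2))) (f (braidGen n (i + 3))) :=
    (commute_braidGen_bklGen_of_lt hi (by omega) (by omega)).symm.map f
  rw [h, bklGen_add_two, map_mul, map_mul, map_inv] at hc
  refine map_braidGen_eq_succ_of_commute f (by omega) (by omega) ?_
  exact commute_of_commute_conj_of_braid (map_braidGen_braid f (by omega) hin)
    (commute_map_braidGen f (by omega) (by omega)) hc

theorem map_braidGen_eq_add_two_of_map_bklGen_add_three_eq {i : ℕ} (hi : 1 ≤ i)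
    (hin : i + 3 ≤ n) (h : f (bklGen n i (i + 3)) = f (braidGen n (i + 1))) :
    f (braidGen n i) = f (braidGen n (i + 2)) := by
  rw [bklGen_succ (by omega), bklGen_add_two] at h
  simp only [map_mul, map_inv] at h
  exact eq_of_conj_conj_eq_of_braid (map_braidGen_braid f (by omega) hin) h

theorem identifiesAdjacentGens_of_compact (hn : 5 ≤ n) {j k l : ℕ}
    (hcfg : (j, k, l) = (2, 1, 3) ∨ (j, k, l) = (2, 2, 3) ∨ (j, k, l) = (3, 2, 3) ∨
      (j, k, l) = (2, 3, 4) ∨ (j, k, l) = (3, 2, 4) ∨ (j, k, l) = (4, 2, 3))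
    (h : f (bklGen n 1 j) = f (bklGen n k l)) : IdentifiesAdjacentGens f := by
  simp only [Prod.mk.injEq] at hcfg
  rcases hcfg with ⟨rfl, rfl, rfl⟩ | ⟨rfl, rfl, rfl⟩ | ⟨rfl, rfl, rfl⟩ | ⟨rfl, rfl, rfl⟩ |
    ⟨rfl, rfl, rfl⟩ | ⟨rfl, rfl, rfl⟩
  · rw [bklGen_self_succ] at h
    exact ⟨1, le_rfl, by omega,
      map_braidGen_eq_succ_of_map_eq_bklGen_add_two f le_rfl (by omega) h⟩
  · rw [bklGen_self_succ, bklGen_self_succ] at h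
    exact ⟨1, le_rfl, by omega, h⟩
  · rw [bklGen_self_succ] at h
    exact ⟨1, le_rfl, by omega, map_braidGen_eq_succ_of_map_bklGen_add_two_eq f h⟩
  · rw [bklGen_self_succ, bklGen_self_succ] at h
    exact ⟨3, by omega, by omega, map_braidGen_eq_succ_of_map_eq_add_two f le_rfl (by omega) h⟩
  · exact ⟨2, by omega, by omega,
      map_braidGen_eq_succ_of_map_bklGen_add_two_eq_succ f le_rfl (by omega) h⟩
  · rw [bklGen_self_succ] at h
    exact ⟨3, by omega, by omega, map_braidGen_eq_succ_of_map_eq_add_two f le_rfl (by omega)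
      (map_braidGen_eq_add_two_of_map_bklGen_add_three_eq f le_rfl (by omega) h)⟩

theorem identifiesAdjacentGens_of_map_bklGen_eq (hn : 5 ≤ n) {i j k l : ℕ} (hi : 1 ≤ i)
    (hij : i < j) (hjn : j ≤ n) (hk : 1 ≤ k) (hkl : k < l) (hln : l ≤ n)
    (hlt : i < k ∨ i = k ∧ j < l) (h : f (bklGen n i j) = f (bklGen n k l)) :
    IdentifiesAdjacentGens f := by
  induction hs : i + j + k + l using Nat.strong_induction_on generalizing i j k l with
  | _ s ih =>
  by_cases hgap : ∃ x, 1 ≤ x ∧ x ≠ i ∧ x ≠ j ∧ x ≠ k ∧ x ≠ l ∧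
      (x + 1 = i ∨ x + 1 = j ∨ x + 1 = k ∨ x + 1 = l)
  · obtain ⟨x, hx, hxi, hxj, hxk, hxl, hx1⟩ := hgap
    have := swap_self_succ_apply_of_ne hxi.symm
    have := swap_self_succ_apply_of_ne hxj.symm
    have := swap_self_succ_apply_of_ne hxk.symm
    have := swap_self_succ_apply_of_ne hxl.symm
    exact ih _ (by omega) (by omega) (by omega) (by omega) (by omega) (by omega) (by omega)
      (by omega) (map_bklGen_swap_eq f hx hi hij hjn hk hkl hln hxi.symm hxj.symm hxk.symm
        hxl.symm h) rfl
  · -- no endpoint has a free slot below it, so the endpoints are `1, …, r` with `r ≤ 4`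
    push Not at hgap
    have hpred : ∀ p, p = i ∨ p = j ∨ p = k ∨ p = l → 2 ≤ p →
        p = i + 1 ∨ p = j + 1 ∨ p = k + 1 ∨ p = l + 1 := fun p hp hp2 => by
      have := hgap (p - 1) (by omega)
      omega
    obtain rfl : i = 1 := by
      have := hpred i (by omega)
      omega
    have hj := hpred j (by omega) (by omega)
    have hk := hpred k (by omega)
    have hl := hpred l (by omega) (by omega)
    have hl4 : l ≤ 4 := by omega
    have hj4 : j ≤ 4 := by omega
    refine identifiesAdjacentGens_of_compact f hn ?_ h
    simp only [Prod.mk.injEq]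
    interval_cases l <;> interval_cases j <;> interval_cases k <;> omega

end Images

/-- For `n ≥ 5` and a homomorphism from `B_n` with non-cyclic range, the images of
the Birman--Ko--Lee generators `ρ_{i,j}`, `1 ≤ i < j ≤ n`, are pairwise distinct. -/
theorem bkl_images_distinct_of_noncyclic
    (n : ℕ) (hn : 5 ≤ n) (G : Type) [Group G]
    (f : BraidGroup n →* G) (hf : ¬ IsCyclic f.range)
    (i j k l : ℕ) (hi : 1 ≤ i) (hij : i < j) (hj : j ≤ n)
    (hk : 1 ≤ k) (hkl : k < l) (hl : l ≤ n) (hne : (i, j) ≠ (k, l)) :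
    f (bklGen n i j) ≠ f (bklGen n k l) := by
  intro heq
  refine hf (isCyclic_range_of_identifiesAdjacentGens f ?_)
  rcases lt_trichotomy i k with hik | rfl | hki
  · exact identifiesAdjacentGens_of_map_bklGen_eq f hn hi hij hj hk hkl hl (.inl hik) heq
  · rcases lt_or_gt_of_ne fun hjl : j = l => hne (by rw [hjl]) with hjl | hlj
    · exact identifiesAdjacentGens_of_map_bklGen_eq f hn hi hij hj hk hkl hl (.inr ⟨rfl, hjl⟩) heq
    · exact identifiesAdjacentGens_of_map_bklGen_eq f hn hk hkl hl hi hij hj (.inr ⟨rfl, hlj⟩)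
        heq.symm
  · exact identifiesAdjacentGens_of_map_bklGen_eq f hn hk hkl hl hi hij hj (.inl hki) heq.symm
end

section
/- Let n ≥ 3 and let B_n be the braid group on n strands with generators σ_1, …, σ_{n−1}. The normal closure of the single element σ_1 σ_2⁻¹ in B_n equals the commutator subgroup of B_n. -/
/-! By the braid relation `σ₁σ₂σ₁ = σ₂σ₁σ₂`, the element `σ₁σ₂⁻¹` is the commutator
`⁅σ₁, σ₁σ₂⁆`. Conversely, modulo `σ₁σ₂⁻¹` all Artin generators become equal: if `σₖ ≡ σₖ₊₁`,
then `σₖ₊₁` commutes with `σₖ₊₂` (as `σₖ` does), and two commuting elements satisfying the braid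
relation are equal. So the quotient is cyclic, hence abelian. -/

open scoped commutatorElement

section BraidRelation

variable {G : Type*} [Group G] {a b : G}

theorem eq_of_braid_of_commute_s11 (hbraid : a * b * a = b * a * b) (hcomm : Commute a b) :
    a = b := by
  have h : a * a * b = b * a * b := by rw [mul_assoc, hcomm.eq, ← mul_assoc, hbraid]
  exact mul_right_cancel (mul_right_cancel h)

theorem commutatorElement_mul_eq_mul_inv_of_braid (hbraid : a * b * a = b * a * b) :
    ⁅a, a * b⁆ = a * b⁻¹ := by
  refine mul_right_cancel (b := a * b * a) ?_
  conv_rhs => rw [hbraid]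
  rw [commutatorElement_def]
  group

theorem braid_chain_apply_eq_apply_zero {x : ℕ → G} {m : ℕ} (h01 : x 0 = x 1)
    (hbraid : ∀ k, k + 2 < m →
      x (k + 1) * x (k + 2) * x (k + 1) = x (k + 2) * x (k + 1) * x (k + 2))
    (hcomm : ∀ k, k + 2 < m → Commute (x k) (x (k + 2))) :
    ∀ k < m, x k = x 0 := by
  have adjacent : ∀ k, k + 1 < m → x k = x (k + 1) := by
    intro k
    induction k with
    | zero => exact fun _ => h01
    | succ k ih =>
      intro hk
      have hcomm' := hcomm k hk
      rw [ih (by omega)] at hcomm'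
      exact eq_of_braid_of_commute_s11 (hbraid k hk) hcomm'
  intro k
  induction k with
  | zero => exact fun _ => rfl
  | succ k ih => exact fun hk => (adjacent k hk).symm.trans (ih (by omega))

end BraidRelation

section BraidGroup

variable {n : ℕ}

theorem braidGen_add_one {k : ℕ} (hk : k < n - 1) :
    braidGen n (k + 1) = PresentedGroup.of (⟨k, hk⟩ : Fin (n - 1)) :=
  dif_pos hk

theorem braidGen_mul_braidGen_mul_braidGen {k : ℕ} (hk : k + 2 < n) :
    braidGen n (k + 1) * braidGen n (k + 2) * braidGen n (k + 1) =
      braidGen n (k + 2) * braidGen n (k + 1) * braidGen n (k + 2) := by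
  rw [braidGen_add_one (by omega), braidGen_add_one (k := k + 1) (by omega)]
  exact PresentedGroup.mk_eq_mk_of_mul_inv_mem (Or.inl ⟨_, _, rfl, rfl⟩)

theorem commute_braidGen_braidGen_add_two {k : ℕ} (hk : k + 3 < n) :
    Commute (braidGen n (k + 1)) (braidGen n (k + 3)) := by
  rw [braidGen_add_one (by omega), braidGen_add_one (k := k + 2) (by omega)]
  exact PresentedGroup.mk_eq_mk_of_mul_inv_mem (Or.inr ⟨_, _, le_rfl, rfl⟩)

theorem map_braidGen_eq_of_map_braidGen_one_eq_two {H : Type*} [Group H]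
    (f : BraidGroup n →* H) (h : f (braidGen n 1) = f (braidGen n 2)) :
    ∀ k < n - 1, f (braidGen n (k + 1)) = f (braidGen n 1) :=
  braid_chain_apply_eq_apply_zero (x := fun k => f (braidGen n (k + 1))) h
    (fun k hk => by
      simpa only [map_mul] using congrArg f (braidGen_mul_braidGen_mul_braidGen (by omega)))
    (fun k hk => (commute_braidGen_braidGen_add_two (by omega)).map f)

theorem commutator_le_of_braidGen_one_mul_inv_mem (N : Subgroup (BraidGroup n)) [N.Normal]
    (hN : braidGen n 1 * (braidGen n 2)⁻¹ ∈ N) : commutator (BraidGroup n) ≤ N := by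
  let f := QuotientGroup.mk' N
  have h12 : f (braidGen n 1) = f (braidGen n 2) := by
    rwa [← mul_inv_eq_one, ← map_inv, ← map_mul, QuotientGroup.mk'_apply,
      QuotientGroup.eq_one_iff]
  have hzpowers (g : BraidGroup n) : f g ∈ Subgroup.zpowers (f (braidGen n 1)) := by
    refine PresentedGroup.generated_by _ ((Subgroup.zpowers _).comap f) (fun i => ?_) g
    change f (PresentedGroup.of i) ∈ Subgroup.zpowers (f (braidGen n 1))
    rw [← braidGen_add_one, map_braidGen_eq_of_map_braidGen_one_eq_two f h12 i i.isLt]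
    exact Subgroup.mem_zpowers _
  have : IsCyclic (BraidGroup n ⧸ N) := ⟨_, QuotientGroup.mk_surjective.forall.2 hzpowers⟩
  exact Subgroup.Normal.quotient_commutative_iff_commutator_le.1 inferInstance

end BraidGroup

/-- For `n ≥ 3`, the normal closure of `σ_1 σ_2⁻¹` in `B_n` is the commutator
subgroup of `B_n`. -/
theorem normalClosure_sigma_one_mul_sigma_two_inv_eq_commutator
    (n : ℕ) (hn : 3 ≤ n) :
    Subgroup.normalClosure {braidGen n 1 * (braidGen n 2)⁻¹} =
      commutator (BraidGroup n) := by
  refine le_antisymm (Subgroup.normalClosure_le_normal ?_)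
    (commutator_le_of_braidGen_one_mul_inv_mem _ (Subgroup.subset_normalClosure rfl))
  rw [Set.singleton_subset_iff, ← commutatorElement_mul_eq_mul_inv_of_braid
    (braidGen_mul_braidGen_mul_braidGen (k := 0) hn)]
  exact Subgroup.commutator_mem_commutator (Subgroup.mem_top _) (Subgroup.mem_top _)
end

section
/- Let B_4 be the braid group on 4 strands with generators σ_1, σ_2, σ_3, and set α = σ_3 σ_2 σ_1. There exists a surjective group homomorphism f : B_4 → Equiv.Perm (Fin 4) such that f(σ_1) is the 4-cycle (1 2 3 4) and f(α) is the transposition (1 2). -/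
theorem braidGen_eq_of (n k : ℕ) (hk₁ : 1 ≤ k) (hk : k < n) :
    braidGen n k = PresentedGroup.of (⟨k - 1, by omega⟩ : Fin (n - 1)) :=
  dif_pos (by omega)

namespace BraidGroup

variable {G : Type*} [Group G]

/-- Sending `σ₁, σ₃ ↦ a` and `σ₂ ↦ b` turns both braid relations of `B₄` into `a b a = b a b` and
the far commutation into a tautology: this is the exceptional map `B₄ → B₃` followed by `B₃ → G`. -/
theorem liftFour_rels {a b : G} (h : a * b * a = b * a * b) :
    ∀ r ∈ braidRels 4, FreeGroup.lift ![a, b, a] r = 1 := by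
  rintro r (⟨i, j, hij, rfl⟩ | ⟨i, j, hij, rfl⟩) <;>
    simp only [map_mul, map_inv, FreeGroup.lift_apply_of, mul_inv_eq_one] <;>
    fin_cases i <;> fin_cases j <;> simp_all

def liftFour {a b : G} (h : a * b * a = b * a * b) : BraidGroup 4 →* G :=
  PresentedGroup.toGroup (liftFour_rels h)

theorem liftFour_of {a b : G} (h : a * b * a = b * a * b) (i : Fin 3) :
    liftFour h (PresentedGroup.of i) = ![a, b, a] i :=
  PresentedGroup.toGroup.of _

theorem liftFour_braidGen_one {a b : G} (h : a * b * a = b * a * b) :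
    liftFour h (braidGen 4 1) = a := by
  rw [braidGen_eq_of 4 1 le_rfl (by norm_num), liftFour_of]
  rfl

theorem liftFour_braidGen_three_two_one {a b : G} (h : a * b * a = b * a * b) :
    liftFour h (braidGen 4 3 * braidGen 4 2 * braidGen 4 1) = a * b * a := by
  rw [map_mul, map_mul, braidGen_eq_of 4 3 (by norm_num) (by norm_num),
    braidGen_eq_of 4 2 (by norm_num) (by norm_num), braidGen_eq_of 4 1 le_rfl (by norm_num),
    liftFour_of, liftFour_of, liftFour_of]
  rfl

end BraidGroup

theorem Equiv.Perm.surjective_of_isCycle_mem_range {G α : Type*} [Group G] [Fintype α]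
    [DecidableEq α] (f : G →* Equiv.Perm α) {c : Equiv.Perm α} (hc : c.IsCycle)
    (hsupp : c.support = Finset.univ) (x : α) (hc_mem : c ∈ f.range)
    (hswap_mem : Equiv.swap x (c x) ∈ f.range) : Function.Surjective f := by
  refine MonoidHom.range_eq_top.mp (eq_top_iff.mpr ?_)
  rw [← Equiv.Perm.closure_cycle_adjacent_swap hc hsupp x, Subgroup.closure_le]
  rintro y (rfl | rfl)
  exacts [hc_mem, hswap_mem]

/-- There is an epimorphism `f : B_4 → S_4` with `f(σ_1) = (1 2 3 4)` and
`f(σ_3 σ_2 σ_1) = (1 2)`. -/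
theorem exists_exceptional_epimorphism_braid_four_to_perm_four :
    ∃ f : BraidGroup 4 →* Equiv.Perm (Fin 4), Function.Surjective f ∧
      f (braidGen 4 1) = c[(0 : Fin 4), 1, 2, 3] ∧
      f (braidGen 4 3 * braidGen 4 2 * braidGen 4 1) = Equiv.swap (0 : Fin 4) 1 := by
  set a : Equiv.Perm (Fin 4) := c[0, 1, 2, 3]
  -- `b = a⁻¹ (0 1) a⁻¹`, so that `a b a = (0 1)`; the braid relation holds as `(a⁻¹ (0 1))³ = 1`.
  set b : Equiv.Perm (Fin 4) := c[0, 2, 3, 1]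
  have hbraid : a * b * a = b * a * b := by decide
  have haba : a * b * a = Equiv.swap 0 1 := by decide
  have ha : a.IsCycle :=
    Cycle.isCycle_formPerm _ (by decide)
      ((Cycle.nontrivial_coe_nodup_iff (by decide)).mpr (by decide))
  have ha_supp : a.support = Finset.univ := by decide
  have ha_zero : a 0 = 1 := by decide
  let f := BraidGroup.liftFour hbraid
  have hσ₁ : f (braidGen 4 1) = a := BraidGroup.liftFour_braidGen_one hbraid
  have hα : f (braidGen 4 3 * braidGen 4 2 * braidGen 4 1) = Equiv.swap 0 1 :=
    (BraidGroup.liftFour_braidGen_three_two_one hbraid).trans haba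
  refine ⟨f, ?_, hσ₁, hα⟩
  refine Equiv.Perm.surjective_of_isCycle_mem_range f ha ha_supp 0 ⟨_, hσ₁⟩ ?_
  rw [ha_zero]
  exact ⟨_, hα⟩
end
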